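/- For relatively prime positive integers a and b, any (a,b)-core is also an (a+b)-core. -/

import Mathlib

/-- A partition: a nonincreasing list of positive integers. -/
structure ListPartition where
  parts : List ℕ
  sorted : parts.Pairwise (· ≥ ·)
  pos : ∀ x ∈ parts, 0 < x

namespace ListPartition

/-- The i-th part (0-indexed), or 0 past the end. -/
def part (lam : ListPartition) (i : ℕ) : ℕ := lam.parts.getD i 0

/-- Hook length of the cell in (0-indexed) row i and (1-indexed) column j:
    λ_i - j + #{rows k > i with λ_k ≥ j} + 1. -/
def hook (lam : ListPartition) (i j : ℕ) : ℕ :=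
  lam.part i - j + ((List.range lam.parts.length).countP
    fun k => decide (i < k ∧ j ≤ lam.part k)) + 1

/-- λ is an A-core: no hook length lies in A. -/
def IsCore (A : Finset ℕ) (lam : ListPartition) : Prop :=
  ∀ i j : ℕ, i < lam.parts.length → 1 ≤ j → j ≤ lam.part i → lam.hook i j ∉ A

/-- The beta set of λ: first-column hook lengths {λ_i + r - i} (1-indexed form). -/
def beta (lam : ListPartition) : Finset ℕ :=
  (Finset.range lam.parts.length).image fun i => lam.part i + (lam.parts.length - 1 - i)

/-- μ is a subpartition of λ. -/
def Sub (mu lam : ListPartition) : Prop :=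
  mu.parts.length ≤ lam.parts.length ∧ ∀ i : ℕ, mu.part i ≤ lam.part i

end ListPartition

/-- Membership in the numerical semigroup generated by the finite set A. -/
def SemiS (A : Finset ℕ) (n : ℕ) : Prop := ∃ f : ℕ → ℕ, n = ∑ a ∈ A, f a * a

/-- n is a gap of S(A). -/
def GapS (A : Finset ℕ) (n : ℕ) : Prop := 0 < n ∧ ¬ SemiS A n

/-- A is UM: some A-core contains every A-core as a subpartition. -/
def UM (A : Finset ℕ) : Prop :=
  ∃ κ : ListPartition, ListPartition.IsCore A κ ∧ ∀ μ : ListPartition, ListPartition.IsCore A μ → μ.Sub κ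

/-! The hook lengths of `λ` are exactly the differences `x - y` with `x ∈ β(λ)`, `y ∉ β(λ)` and
`y < x`. Hence `λ` is an `A`-core iff `β(λ)` is closed under `x ↦ x - n` for `n ∈ A`, `n ≤ x`;
closure under subtracting `a` and under subtracting `b` gives closure under subtracting `a + b`. -/

theorem Nat.lt_count_iff_of_antitone {p : ℕ → Prop} [DecidablePred p] (hp : Antitone p)
    {k n : ℕ} (hk : k < n) : k < Nat.count p n ↔ p k := by
  constructor
  · intro hlt
    by_contra hpk
    have htail : Nat.count (fun m => p (k + m)) (n - k) = 0 :=
      Nat.count_of_forall_not fun m _ hpm => hpk (hp (Nat.le_add_right k m) hpm)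
    have hsplit := Nat.count_add p k (n - k)
    rw [Nat.add_sub_cancel' hk.le, htail] at hsplit
    have := Nat.count_le (p := p) (n := k)
    omega
  · intro hpk
    have hprefix : Nat.count p (k + 1) = k + 1 :=
      Nat.count_of_forall fun m hm => hp (Nat.le_of_lt_succ hm) hpk
    have := Nat.count_monotone p (show k + 1 ≤ n from hk)
    omega

namespace ListPartition

variable (lam : ListPartition)

theorem part_antitone : Antitone lam.part := by
  intro m m' h
  unfold part
  rcases lt_or_ge m' lam.parts.length with h' | h'
  · have hm : m < lam.parts.length := lt_of_le_of_lt h h'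
    rw [List.getD_eq_getElem _ _ h', List.getD_eq_getElem _ _ hm]
    rcases h.eq_or_lt with rfl | hlt
    · exact le_rfl
    · simpa using lam.sorted.rel_get_of_lt (a := ⟨m, hm⟩) (b := ⟨m', h'⟩) (Fin.mk_lt_mk.mpr hlt)
  · rw [List.getD_eq_default _ _ h']
    exact Nat.zero_le _

def betaNum (i : ℕ) : ℕ := lam.part i + (lam.parts.length - 1 - i)

theorem mem_beta {x : ℕ} : x ∈ lam.beta ↔ ∃ i < lam.parts.length, lam.betaNum i = x := by
  simp [beta, betaNum]

theorem betaNum_antitone : Antitone lam.betaNum := fun m m' h => by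
  have := lam.part_antitone h
  unfold betaNum
  omega

theorem betaNum_add_sub_le {m m' : ℕ} (h : m ≤ m') (h' : m' < lam.parts.length) :
    lam.betaNum m' + (m' - m) ≤ lam.betaNum m := by
  have := lam.part_antitone h
  unfold betaNum
  omega

/-- The part `λ'_j` of the conjugate partition. -/
def colLen (j : ℕ) : ℕ := Nat.count (fun k => j ≤ lam.part k) lam.parts.length

theorem colLen_le (j : ℕ) : lam.colLen j ≤ lam.parts.length := Nat.count_le _

theorem lt_colLen_iff {j k : ℕ} (hk : k < lam.parts.length) : k < lam.colLen j ↔ j ≤ lam.part k :=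
  Nat.lt_count_iff_of_antitone (fun _ _ h hj => hj.trans (lam.part_antitone h)) hk

theorem colLen_eq_of_forall_lt_iff {j t : ℕ} (htL : t ≤ lam.parts.length)
    (h : ∀ k < lam.parts.length, k < t ↔ j ≤ lam.part k) : lam.colLen j = t := by
  have := lam.colLen_le j
  by_contra hne
  rcases Nat.lt_or_gt_of_ne hne with hlt | hgt
  · have := (lam.lt_colLen_iff (by omega)).mpr ((h (lam.colLen j) (by omega)).mp hlt)
    omega
  · have := (h t (by omega)).mpr ((lam.lt_colLen_iff (by omega)).mp hgt)
    omega

theorem hook_eq {i j : ℕ} (hi : i < lam.parts.length) (hj : j ≤ lam.part i) :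
    lam.hook i j = lam.part i - j + (lam.colLen j - (i + 1)) + 1 := by
  have hleg : (List.range lam.parts.length).countP (fun k => decide (i < k ∧ j ≤ lam.part k))
      = lam.colLen j - (i + 1) := by
    change Nat.count _ _ = _
    rw [Nat.count_eq_card_filter_range, Nat.sub_add_eq, ← Nat.card_Ioo]
    congr 1
    ext k
    have := lam.colLen_le j
    have := (lam.lt_colLen_iff hi).mpr hj
    simp only [Finset.mem_filter, Finset.mem_range, Finset.mem_Ioo]
    constructor
    · rintro ⟨hk, hik, hjk⟩
      exact ⟨hik, (lam.lt_colLen_iff hk).mpr hjk⟩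
    · rintro ⟨hik, hkc⟩
      have hk : k < lam.parts.length := by omega
      exact ⟨hk, hik, (lam.lt_colLen_iff hk).mp hkc⟩
  rw [hook, hleg]

theorem hook_le_betaNum {i j : ℕ} (hi : i < lam.parts.length) (hj1 : 1 ≤ j)
    (hj : j ≤ lam.part i) : lam.hook i j ≤ lam.betaNum i := by
  have := (lam.lt_colLen_iff hi).mpr hj
  have := lam.colLen_le j
  rw [lam.hook_eq hi hj]
  unfold betaNum
  omega

/-- The hook at `(i, j)` ends at the empty position `(j - 1) + (L - λ'_j)`: the beads of rows
below `λ'_j` lie strictly below it, the others strictly above. -/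
theorem betaNum_sub_hook_notMem_beta {i j : ℕ} (hi : i < lam.parts.length) (hj1 : 1 ≤ j)
    (hj : j ≤ lam.part i) : lam.betaNum i - lam.hook i j ∉ lam.beta := by
  rw [mem_beta]
  rintro ⟨m, hm, hbm⟩
  have := (lam.lt_colLen_iff hi).mpr hj
  have := lam.colLen_le j
  have hmc := lam.lt_colLen_iff (j := j) hm
  rw [lam.hook_eq hi hj] at hbm
  unfold betaNum at hbm
  by_cases hmj : m < lam.colLen j
  · have := hmc.mp hmj
    omega
  · have := mt hmc.mpr hmj
    omega

/-- With `t` the number of beads above the empty position `y`, the hook of the bead `x` in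
column `j = y + 1 - (L - t)` ends at `y`. -/
theorem exists_hook_eq_sub {x y : ℕ} (hx : x ∈ lam.beta) (hy : y ∉ lam.beta) (hyx : y < x) :
    ∃ i j, i < lam.parts.length ∧ 1 ≤ j ∧ j ≤ lam.part i ∧ lam.hook i j = x - y := by
  obtain ⟨i, hi, rfl⟩ := lam.mem_beta.mp hx
  set L := lam.parts.length
  set t := Nat.count (fun m => y < lam.betaNum m) L
  have ht_iff : ∀ m < L, m < t ↔ y < lam.betaNum m := fun m hm =>
    Nat.lt_count_iff_of_antitone (fun _ _ h hy => hy.trans_le (lam.betaNum_antitone h)) hm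
  have htL : t ≤ L := Nat.count_le _
  have hit : i < t := (ht_iff i hi).mpr hyx
  have hbelow : ∀ m, t ≤ m → m < L → lam.betaNum m < y := fun m htm hm => by
    have hne : lam.betaNum m ≠ y := fun h => hy (lam.mem_beta.mpr ⟨m, hm, h⟩)
    have := mt (ht_iff m hm).mpr (by omega)
    omega
  have hLt : L - t ≤ y := by
    rcases htL.lt_or_eq with htL' | htL'
    · have := hbelow t le_rfl htL'
      have := lam.betaNum_add_sub_le (Nat.le_sub_one_of_lt htL') (by omega)
      omega
    · omega
  set j := y + 1 - (L - t)
  have hcol : ∀ k < L, k < t ↔ j ≤ lam.part k := by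
    intro k hk
    unfold betaNum at ht_iff hbelow
    constructor
    · intro hkt
      have := (ht_iff (t - 1) (by omega)).mp (by omega)
      have := lam.betaNum_add_sub_le (Nat.le_sub_one_of_lt hkt) (by omega)
      unfold betaNum at this
      omega
    · intro hjk
      by_contra hkt
      have := hbelow t le_rfl (by omega)
      have := lam.betaNum_add_sub_le (not_lt.mp hkt) hk
      unfold betaNum at this
      omega
  have hcolLen : lam.colLen j = t := lam.colLen_eq_of_forall_lt_iff htL hcol
  have hji : j ≤ lam.part i := (hcol i hi).mp hit
  refine ⟨i, j, hi, by omega, hji, ?_⟩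
  rw [lam.hook_eq hi hji, hcolLen]
  unfold betaNum
  omega

theorem isCore_iff_sub_mem_beta (A : Finset ℕ) :
    lam.IsCore A ↔ ∀ n ∈ A, ∀ x ∈ lam.beta, n ≤ x → x - n ∈ lam.beta := by
  constructor
  · intro hcore n hn x hx hnx
    by_contra hxn
    have hn0 : n ≠ 0 := by rintro rfl; exact hxn hx
    obtain ⟨i, j, hi, hj1, hj, hhook⟩ := lam.exists_hook_eq_sub hx hxn (by omega)
    exact hcore i j hi hj1 hj (by rwa [hhook, Nat.sub_sub_self hnx])
  · intro hclosed i j hi hj1 hj hhook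
    exact lam.betaNum_sub_hook_notMem_beta hi hj1 hj <|
      hclosed _ hhook _ (lam.mem_beta.mpr ⟨i, hi, rfl⟩) (lam.hook_le_betaNum hi hj1 hj)

end ListPartition

theorem core_ab_is_core_add_general (a b : ℕ) (lam : ListPartition) (h : ListPartition.IsCore {a, b} lam) :
    ListPartition.IsCore {a + b} lam := by
  simp only [ListPartition.isCore_iff_sub_mem_beta, Finset.mem_insert, Finset.mem_singleton,
    forall_eq_or_imp, forall_eq] at h ⊢
  obtain ⟨hsub_a, hsub_b⟩ := h
  intro x hx hab
  rw [← Nat.sub_sub]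
  exact hsub_b _ (hsub_a x hx (by omega)) (by omega)

theorem core_ab_is_core_add (a b : ℕ) (ha : 0 < a) (hb : 0 < b)
    (hab : Nat.Coprime a b) (lam : ListPartition) (h : ListPartition.IsCore {a, b} lam) :
    ListPartition.IsCore {a + b} lam :=
  core_ab_is_core_add_general a b lam h
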